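/- For any real numbers b, K with 0 < b < K, the function h(t) = (2^{bt} - 1)/(2^{Kt} - 1) is strictly monotonically decreasing on t ∈ (0, ∞). -/
import Mathlib

theorem stmt_0 (b K : ℝ) (hb : 0 < b) (hbK : b < K) :
    StrictAntiOn (fun t : ℝ => ((2 : ℝ) ^ (b * t) - 1) / ((2 : ℝ) ^ (K * t) - 1))
      (Set.Ioi (0 : ℝ)) := by
  have hK : 0 < K := hb.trans hbK
  intro s hs t ht hst
  simp only [Set.mem_Ioi] at hs ht
  set lam := b / K with hlam
  have hlam0 : 0 < lam := div_pos hb hK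
  have hlam1 : lam < 1 := (div_lt_one hK).mpr hbK
  have hconc := Real.strictConcaveOn_rpow hlam0 hlam1
  have key : ∀ x : ℝ, (2:ℝ) ^ (b * x) = ((2:ℝ) ^ (K * x)) ^ lam := by
    intro x
    rw [← Real.rpow_mul (by norm_num : (0:ℝ) ≤ 2)]
    congr 1
    rw [hlam]
    field_simp
  have hu : (1:ℝ) < (2:ℝ) ^ (K * s) :=
    Real.one_lt_rpow_iff_of_pos (by norm_num) |>.mpr (Or.inl ⟨by norm_num, by positivity⟩)
  have hv : (1:ℝ) < (2:ℝ) ^ (K * t) :=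
    Real.one_lt_rpow_iff_of_pos (by norm_num) |>.mpr (Or.inl ⟨by norm_num, by positivity⟩)
  have huv : (2:ℝ) ^ (K * s) < (2:ℝ) ^ (K * t) :=
    Real.rpow_lt_rpow_left_iff (by norm_num) |>.mpr (by nlinarith)
  have h := hconc.secant_strict_mono (a := 1)
    (by norm_num : (1:ℝ) ∈ Set.Ici (0:ℝ))
    (Set.mem_Ici.mpr (by linarith) : (2:ℝ) ^ (K * s) ∈ Set.Ici (0:ℝ))
    (Set.mem_Ici.mpr (by linarith) : (2:ℝ) ^ (K * t) ∈ Set.Ici (0:ℝ))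
    (ne_of_gt hu) (ne_of_gt hv) huv
  simp only [Real.one_rpow] at h
  simpa [key] using h
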